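/- arXiv:1109.0696 — 3 statements merged into one kernel-verified Lean document; each statement's English description precedes it below -/
import Mathlib

section
/- Let P, P_Y, P_Z, P_E > 0 with P_Y < P_Z, and let D satisfy 1/(1+P/P_Y) ≤ D ≤ 1. Then 1/(1 + 1/P_E + (1/D − 1)·P_Y/P_Z) ≤ 1/( max{1, (1/D)·(1+P/P_Z)/(1+P/P_Y)} + 1/P_E ). -/
theorem stmt_8 (P PY PZ PE D : ℝ) (hP : 0 < P) (hPY : 0 < PY) (hPZ : 0 < PZ)
    (hPE : 0 < PE) (hYZ : PY < PZ)
    (hD1 : 1 / (1 + P / PY) ≤ D) (hD2 : D ≤ 1) :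
    1 / (1 + 1 / PE + (1 / D - 1) * PY / PZ) ≤
      1 / (max 1 ((1 / D) * (1 + P / PZ) / (1 + P / PY)) + 1 / PE) := by
  have hden : 0 < 1 + P / PY := by positivity
  have hD0 : 0 < D := lt_of_lt_of_le (by positivity) hD1
  have hinv : 1 / D ≤ 1 + P / PY := by
    rw [div_le_iff₀ hD0]
    have := (div_le_iff₀ hden).mp hD1
    nlinarith
  have hone : (1:ℝ) ≤ 1 / D := by
    rw [le_div_iff₀ hD0]; linarith
  have hkey : max 1 ((1 / D) * (1 + P / PZ) / (1 + P / PY)) ≤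
      1 + (1 / D - 1) * PY / PZ := by
    apply max_le
    · have : 0 ≤ (1 / D - 1) * PY / PZ := by
        apply div_nonneg _ hPZ.le
        exact mul_nonneg (by linarith) hPY.le
      linarith
    · rw [div_le_iff₀ hden]
      have hfrac : (1 / D - 1) * (1 - PY / PZ) ≤ P / PY - P / PZ := by
        have hPY' : PY / PZ < 1 := (div_lt_one hPZ).mpr hYZ
        calc (1 / D - 1) * (1 - PY / PZ) ≤ (P / PY) * (1 - PY / PZ) := by
              apply mul_le_mul_of_nonneg_right (by linarith) (by linarith)
          _ ≤ P / PY - P / PZ := by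
              rw [mul_sub, mul_one]
              have : P / PY * (PY / PZ) = P / PZ := by field_simp
              rw [this]
      have expand : (1 + (1 / D - 1) * PY / PZ) * (1 + P / PY)
          - (1 / D) * (1 + P / PZ)
          = (P / PY - P / PZ) - (1 / D - 1) * (1 - PY / PZ) := by
        field_simp
        ring
      linarith
  have hBpos : 0 < max 1 ((1 / D) * (1 + P / PZ) / (1 + P / PY)) + 1 / PE := by
    have h1 : (1:ℝ) ≤ max 1 ((1 / D) * (1 + P / PZ) / (1 + P / PY)) := le_max_left _ _
    have h2 : 0 < 1 / PE := by positivity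
    linarith
  apply one_div_le_one_div_of_le hBpos
  linarith
end

section
/- Let P, P_Y, P_Z, P_E > 0 with P_Y < P_Z, let D > 0, and let μ ∈ [1/(1+P/P_Y), 1]. Then (1/(1/μ + 1/P_E)) · min{ 1, D(1+P/P_Y)/(1 + μ·P/P_Z − (1−μ)·P_Y/P_Z) } ≤ 1/( max{1, (1/D)·(1+P/P_Z)/(1+P/P_Y)} + 1/P_E ). -/
theorem stmt_9 (P PY PZ PE D μ : ℝ) (hP : 0 < P) (hPY : 0 < PY) (hPZ : 0 < PZ)
    (hPE : 0 < PE) (hYZ : PY < PZ) (hD : 0 < D)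
    (hμ : μ ∈ Set.Icc (1 / (1 + P / PY)) 1) :
    (1 / (1 / μ + 1 / PE)) *
        min 1 (D * (1 + P / PY) / (1 + μ * (P / PZ) - (1 - μ) * (PY / PZ))) ≤
      1 / (max 1 ((1 / D) * (1 + P / PZ) / (1 + P / PY)) + 1 / PE) := by
  obtain ⟨hμl, hμu⟩ := hμ
  have ha : (0:ℝ) < 1 + P / PY := by positivity
  have hμ0 : 0 < μ := lt_of_lt_of_le (by positivity) hμl
  have hPZ' : (0:ℝ) < 1 / PZ := by positivity
  set E := 1 + μ * (P / PZ) - (1 - μ) * (PY / PZ) with hEdef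
  have h1a : 1 ≤ μ * (1 + P / PY) := (div_le_iff₀ ha).mp hμl
  have hmul : PY ≤ μ * (PY + P) := by
    have hPdiv : P / PY * PY = P := div_mul_cancel₀ P hPY.ne'
    nlinarith [h1a]
  have hE1 : (1:ℝ) ≤ E := by
    have h2 : (1 - μ) * PY ≤ μ * P := by nlinarith
    have h3 : (1 - μ) * PY * (1/PZ) ≤ μ * P * (1/PZ) :=
      mul_le_mul_of_nonneg_right h2 hPZ'.le
    have hμP : μ * (P / PZ) = μ * P * (1/PZ) := by ring
    have hμPY : (1 - μ) * (PY / PZ) = (1 - μ) * PY * (1/PZ) := by ring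
    rw [hEdef, hμP, hμPY]; linarith
  have hE0 : (0:ℝ) < E := lt_of_lt_of_le one_pos hE1
  have hkey : μ * (1 + P / PZ) ≤ E := by
    have hr : PY / PZ ≤ 1 := (div_le_one hPZ).mpr hYZ.le
    have : 0 ≤ (1 - μ) * (1 - PY / PZ) := mul_nonneg (by linarith) (by linarith)
    rw [hEdef]; nlinarith
  set m := min 1 (D * (1 + P / PY) / E) with hmdef
  set C := (1 / D) * (1 + P / PZ) / (1 + P / PY) with hCdef
  have hm0 : 0 ≤ m := le_min zero_le_one (by positivity)
  have hm1 : m ≤ 1 := min_le_left _ _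
  have hm2 : m ≤ D * (1 + P / PY) / E := min_le_right _ _
  have hC0 : 0 ≤ C := by positivity
  have hfrac : (1 + P / PZ) / E ≤ 1 / μ := by
    rw [div_le_div_iff₀ hE0 hμ0]; linarith [hkey]
  have hmC : m * C ≤ 1 / μ := by
    have h1 : m * C ≤ (D * (1 + P / PY) / E) * C := mul_le_mul_of_nonneg_right hm2 hC0
    have h2 : (D * (1 + P / PY) / E) * C = (1 + P / PZ) / E := by
      rw [hCdef]; field_simp
    rw [h2] at h1; exact h1.trans hfrac
  have hinvμ : (1:ℝ) ≤ 1 / μ := (le_div_iff₀ hμ0).mpr (by linarith)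
  have hmM : m * max 1 C ≤ 1 / μ := by
    rcases le_total 1 C with h | h
    · rw [max_eq_right h]; exact hmC
    · rw [max_eq_left h, mul_one]; exact hm1.trans hinvμ
  have hS : (0:ℝ) < 1 / μ + 1 / PE := by positivity
  have hT : (0:ℝ) < max 1 C + 1 / PE := by
    have : (1:ℝ) ≤ max 1 C := le_max_left _ _
    have : (0:ℝ) < 1 / PE := by positivity
    linarith
  rw [div_mul_eq_mul_div, one_mul, div_le_div_iff₀ hS hT, one_mul]
  have hmPE : m * (1 / PE) ≤ 1 / PE := by
    have := mul_le_mul_of_nonneg_right hm1 (le_of_lt (by positivity : (0:ℝ) < 1 / PE))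
    linarith [this]
  calc m * (max 1 C + 1 / PE) = m * max 1 C + m * (1 / PE) := by ring
    _ ≤ 1 / μ + 1 / PE := add_le_add hmM hmPE
end

section
/- Let P, P_Y, P_Z, P_E > 0 with P_Y < P_Z. Define D_min = 1/(1+P/P_Y), D₁ = (1+P/P_Z)/(1+P/P_Y), f(D) = 1/((1/D)·(1+P/P_Z)/(1+P/P_Y) + 1/P_E) for D ∈ [D_min, D₁]. Then for every D strictly between D_min and D₁, f(D) > f(D_min) + (D − D_min)/(D₁ − D_min) · (f(D₁) − f(D_min)); i.e., the optimal tradeoff curve lies strictly above the time-sharing line between its endpoints. -/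
/-! For `D > 0` the curve is `g D = 1 / (c / D + e) = D / (c + e D)` with `c, e > 0`, whose
increments are `g y - g x = c (y - x) / ((c + e x) (c + e y))`. Hence the slope of the chord of `g`
from `a` to `t` is `c / ((c + e a) (c + e t))`, strictly decreasing in `t`: the chord to `x < b`
is steeper than the chord to `b`, which is the claim. -/

lemma one_div_div_add_eq_div (c e : ℝ) {x : ℝ} (hx : x ≠ 0) :
    1 / (c / x + e) = x / (c + e * x) := by
  rw [div_add' _ _ _ hx, one_div_div, mul_comm]

lemma div_add_mul_sub_div_add_mul (c e x y : ℝ) (hx : c + e * x ≠ 0) (hy : c + e * y ≠ 0) :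
    y / (c + e * y) - x / (c + e * x) = c * (y - x) / ((c + e * x) * (c + e * y)) := by
  rw [div_sub_div _ _ hy hx, mul_comm (c + e * y)]
  ring

lemma div_add_mul_chord_lt {c e a x b : ℝ} (hc : 0 < c) (he : 0 < e) (ha : 0 < c + e * a)
    (hax : a < x) (hxb : x < b) :
    a / (c + e * a) + (x - a) / (b - a) * (b / (c + e * b) - a / (c + e * a))
      < x / (c + e * x) := by
  have hx : 0 < c + e * x := by nlinarith
  have hb : 0 < c + e * b := by nlinarith
  have hxb' : c + e * x < c + e * b := by nlinarith
  have hba : b - a ≠ 0 := by linarith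
  have hgap : x / (c + e * x) - a / (c + e * a)
      - (x - a) / (b - a) * (b / (c + e * b) - a / (c + e * a))
      = c * (x - a) / ((c + e * a) * (c + e * x)) - c * (x - a) / ((c + e * a) * (c + e * b)) := by
    rw [div_add_mul_sub_div_add_mul c e a x ha.ne' hx.ne',
      div_add_mul_sub_div_add_mul c e a b ha.ne' hb.ne']
    field_simp
  have hlt : c * (x - a) / ((c + e * a) * (c + e * b))
      < c * (x - a) / ((c + e * a) * (c + e * x)) := by
    have : 0 < c * (x - a) := mul_pos hc (sub_pos.2 hax)
    gcongr
  linarith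

theorem stmt_18_general (P PY PZ PE : ℝ) (hP : 0 < P) (hPY : 0 < PY) (hPZ : 0 < PZ)
    (hPE : 0 < PE)
    (Dmin D₁ : ℝ)
    (hDmin : Dmin = 1 / (1 + P / PY))
    (f : ℝ → ℝ)
    (hf : ∀ D, f D = 1 / ((1 / D) * (1 + P / PZ) / (1 + P / PY) + 1 / PE)) :
    ∀ D : ℝ, Dmin < D → D < D₁ →
      f Dmin + (D - Dmin) / (D₁ - Dmin) * (f D₁ - f Dmin) < f D := by
  intro D hDminD hDD₁
  set c := (1 + P / PZ) / (1 + P / PY)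
  have hc : 0 < c := by positivity
  have hDmin_pos : 0 < Dmin := by rw [hDmin]; positivity
  have hf_div : ∀ x ≠ 0, f x = x / (c + 1 / PE * x) := fun x hx => by
    rw [hf, ← one_div_div_add_eq_div c _ hx, one_div_mul_eq_div, div_right_comm]
  rw [hf_div Dmin hDmin_pos.ne', hf_div D (by linarith), hf_div D₁ (by linarith)]
  exact div_add_mul_chord_lt hc (by positivity) (by positivity) hDminD hDD₁

theorem stmt_18 (P PY PZ PE : ℝ) (hP : 0 < P) (hPY : 0 < PY) (hPZ : 0 < PZ)
    (hPE : 0 < PE) (hYZ : PY < PZ)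
    (Dmin D₁ : ℝ)
    (hDmin : Dmin = 1 / (1 + P / PY))
    (hD₁ : D₁ = (1 + P / PZ) / (1 + P / PY))
    (f : ℝ → ℝ)
    (hf : ∀ D, f D = 1 / ((1 / D) * (1 + P / PZ) / (1 + P / PY) + 1 / PE)) :
    ∀ D : ℝ, Dmin < D → D < D₁ →
      f Dmin + (D - Dmin) / (D₁ - Dmin) * (f D₁ - f Dmin) < f D :=
  stmt_18_general P PY PZ PE hP hPY hPZ hPE Dmin D₁ hDmin f hf
end
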